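/- arXiv:cs/0207087 — 2 statements merged into one kernel-verified Lean document; each statement's English description precedes it below -/
import Mathlib

section
/- For any normal default structure (A, Con, Δ) with trivial entailment, the triple (A, Con, |~_A), where |~_A is the skeptical nonmonotonic consequence relation, is an abstract nonmonotonic system; that is, it satisfies: (1) X ⊆ Y and Y ∈ Con imply X ∈ Con; (2) {a} ∈ Con for every a ∈ A; (3) X |~_A T implies X ∪ T ∈ Con; (4) Y ⊆ X and X ∈ Con imply X |~_A Y; (5) X |~_A T and X ∪ T |~_A Y imply X |~_A Y; (6) X |~_A Y and X |~_A Z imply X |~_A Y ∪ Z. -/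
/-- A set is consistent if every finite subset of it lies in Con. -/
def IsCons {α : Type*} (Con : Set α → Prop) (S : Set α) : Prop :=
  ∀ X : Set α, X ⊆ S → X.Finite → Con X

/-- With trivial entailment: φ(x, S, 0) = x and
φ(x, S, i+1) = φ(x, S, i) ∪ {a | (X, a) ∈ Δ, X ⊆ φ(x, S, i), {a} ∪ S consistent}. -/
def phiT {α : Type*} (Con : Set α → Prop) (Δ : Set (Set α × α)) (x S : Set α) :
    ℕ → Set α
  | 0 => x
  | i + 1 =>
      phiT Con Δ x S i ∪
        {a | ∃ X : Set α, (X, a) ∈ Δ ∧ X ⊆ phiT Con Δ x S i ∧ IsCons Con ({a} ∪ S)}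

/-- Φ(x, S) = ⋃_{i≥0} φ(x, S, i). -/
def PhiT {α : Type*} (Con : Set α → Prop) (Δ : Set (Set α × α)) (x S : Set α) : Set α :=
  ⋃ i, phiT Con Δ x S i

/-- A consistent set y is an extension of x (x ε y) if Φ(x, y) = y. -/
def ExtT {α : Type*} (Con : Set α → Prop) (Δ : Set (Set α × α)) (x y : Set α) : Prop :=
  IsCons Con y ∧ PhiT Con Δ x y = y

/-- Skeptical nonmonotonic consequence: X |~ a iff a belongs to every extension of X. -/
def Nmc {α : Type*} (Con : Set α → Prop) (Δ : Set (Set α × α)) (X : Set α) (a : α) : Prop :=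
  ∀ y : Set α, ExtT Con Δ X y → a ∈ y

/-- X |~ Y iff X |~ b for every b ∈ Y. -/
def NmcS {α : Type*} (Con : Set α → Prop) (Δ : Set (Set α × α)) (X Y : Set α) : Prop :=
  ∀ b ∈ Y, Nmc Con Δ X b

/-!
Extensions exist: by Zorn's lemma there is a maximal consistent `y ⊇ X` each of whose elements is
derivable from `X` by rules with conclusions in `y`, and maximality forces `y` to be closed under
every default applicable relative to `y`, i.e. `Φ(X, y) = y`. Hence `X ∪ T` is consistent when
`X |~ T`, since it lies in any extension of `X`. Cautious cut follows from cumulativity of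
extensions: an extension `y` of `X` with `T ⊆ y` is also an extension of `X ∪ T`, because `y`
already contains `X ∪ T` and is closed under the defaults applicable relative to `y`.
-/

open Set

lemma Set.Finite.exists_subset_of_subset_iUnion_of_monotone {α : Type*} {f : ℕ → Set α}
    (hf : Monotone f) {s : Set α} (hs : s.Finite) (h : s ⊆ ⋃ n, f n) : ∃ n, s ⊆ f n := by
  simpa using hf.directed_le.exists_mem_subset_of_finset_subset_biUnion (s := hs.toFinset)
    (by simpa using h)

section Extensions

variable {α : Type*} {Con : Set α → Prop} {Δ : Set (Set α × α)}

lemma isCons_sUnion_of_isChain {c : Set (Set α)} (hc : IsChain (· ⊆ ·) c) (hne : c.Nonempty)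
    (hcons : ∀ z ∈ c, IsCons Con z) : IsCons Con (⋃₀ c) := by
  intro W hW hfin
  obtain ⟨z, hzc, hWz⟩ := hc.directedOn.exists_mem_subset_of_finite_of_subset_sUnion hne hfin hW
  exact hcons z hzc W hWz hfin

lemma phiT_monotone (x S : Set α) : Monotone (phiT Con Δ x S) :=
  monotone_nat_of_le_succ fun _ => subset_union_left

lemma phiT_mono_left {x x' : Set α} (S : Set α) (h : x ⊆ x') :
    ∀ n, phiT Con Δ x S n ⊆ phiT Con Δ x' S n
  | 0 => h
  | n + 1 => by
    rintro a (ha | ⟨W, hW, hWs, hc⟩)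
    · exact Or.inl (phiT_mono_left S h n ha)
    · exact Or.inr ⟨W, hW, hWs.trans (phiT_mono_left S h n), hc⟩

lemma PhiT_mono_left {x x' : Set α} (S : Set α) (h : x ⊆ x') :
    PhiT Con Δ x S ⊆ PhiT Con Δ x' S :=
  iUnion_mono (phiT_mono_left S h)

lemma subset_PhiT (x S : Set α) : x ⊆ PhiT Con Δ x S :=
  subset_iUnion (phiT Con Δ x S) 0

lemma mem_PhiT_of_mem_of_subset {x S W : Set α} {a : α} (hW : (W, a) ∈ Δ) (hWfin : W.Finite)
    (hWx : W ⊆ PhiT Con Δ x S) (ha : IsCons Con ({a} ∪ S)) : a ∈ PhiT Con Δ x S := by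
  obtain ⟨n, hn⟩ := hWfin.exists_subset_of_subset_iUnion_of_monotone (phiT_monotone x S) hWx
  exact mem_iUnion.2 ⟨n + 1, Or.inr ⟨W, hW, hn, ha⟩⟩

lemma PhiT_subset {x S y : Set α} (hxy : x ⊆ y)
    (hy : ∀ W a, (W, a) ∈ Δ → W ⊆ y → IsCons Con ({a} ∪ S) → a ∈ y) :
    PhiT Con Δ x S ⊆ y := by
  refine iUnion_subset fun n => ?_
  induction n with
  | zero => exact hxy
  | succ n ih =>
    rintro a (ha | ⟨W, hW, hWs, hcons⟩)
    · exact ih ha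
    · exact hy W a hW (hWs.trans ih) hcons

lemma ExtT.subset {x y : Set α} (h : ExtT Con Δ x y) : x ⊆ y :=
  h.2 ▸ subset_PhiT x y

lemma ExtT.union_of_subset (hΔ : ∀ p ∈ Δ, p.1.Finite) {x T y : Set α} (h : ExtT Con Δ x y)
    (hT : T ⊆ y) : ExtT Con Δ (x ∪ T) y := by
  refine ⟨h.1, (PhiT_subset (union_subset h.subset hT) fun W a hW hWy ha => ?_).antisymm ?_⟩
  · rw [← h.2] at hWy ⊢
    exact mem_PhiT_of_mem_of_subset hW (hΔ _ hW) hWy ha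
  · calc y = PhiT Con Δ x y := h.2.symm
      _ ⊆ PhiT Con Δ (x ∪ T) y := PhiT_mono_left y subset_union_left

variable (Δ) in
/-- The stages of `phiT` with the consistency test on a conclusion replaced by membership in `z`.
Unlike `phiT`, this is monotone in `z`, which is what makes Zorn's lemma applicable. -/
def phiWithin (x z : Set α) : ℕ → Set α
  | 0 => x
  | n + 1 => phiWithin x z n ∪ {a | a ∈ z ∧ ∃ W, (W, a) ∈ Δ ∧ W ⊆ phiWithin x z n}

variable (Δ) in
def PhiWithin (x z : Set α) : Set α :=
  ⋃ n, phiWithin Δ x z n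

lemma phiWithin_monotone (x z : Set α) : Monotone (phiWithin Δ x z) :=
  monotone_nat_of_le_succ fun _ => subset_union_left

lemma phiWithin_mono_right (x : Set α) {z z' : Set α} (h : z ⊆ z') :
    ∀ n, phiWithin Δ x z n ⊆ phiWithin Δ x z' n
  | 0 => subset_rfl
  | n + 1 => by
    rintro a (ha | ⟨haz, W, hW, hWs⟩)
    · exact Or.inl (phiWithin_mono_right x h n ha)
    · exact Or.inr ⟨h haz, W, hW, hWs.trans (phiWithin_mono_right x h n)⟩

lemma PhiWithin_mono_right (x : Set α) {z z' : Set α} (h : z ⊆ z') :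
    PhiWithin Δ x z ⊆ PhiWithin Δ x z' :=
  iUnion_mono (phiWithin_mono_right x h)

lemma mem_PhiWithin_of_mem_of_subset {x z W : Set α} {a : α} (hW : (W, a) ∈ Δ)
    (hWfin : W.Finite) (hWx : W ⊆ PhiWithin Δ x z) (ha : a ∈ z) : a ∈ PhiWithin Δ x z := by
  obtain ⟨n, hn⟩ :=
    hWfin.exists_subset_of_subset_iUnion_of_monotone (phiWithin_monotone x z) hWx
  exact mem_iUnion.2 ⟨n + 1, Or.inr ⟨ha, W, hW, hn⟩⟩

lemma PhiWithin_subset_PhiT (hΔ : ∀ p ∈ Δ, p.1.Finite) (x : Set α) {y : Set α}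
    (hy : IsCons Con y) : PhiWithin Δ x y ⊆ PhiT Con Δ x y := by
  refine iUnion_subset fun n => ?_
  induction n with
  | zero => exact subset_PhiT x y
  | succ n ih =>
    rintro a (ha | ⟨hay, W, hW, hWs⟩)
    · exact ih ha
    · refine mem_PhiT_of_mem_of_subset hW (hΔ _ hW) (hWs.trans ih) ?_
      rwa [singleton_union, insert_eq_of_mem hay]

lemma exists_extT (hΔ : ∀ p ∈ Δ, p.1.Finite) {x : Set α} (hx : IsCons Con x) :
    ∃ y, ExtT Con Δ x y := by
  set K : Set (Set α) := {z | IsCons Con z ∧ z ⊆ PhiWithin Δ x z}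
  have hK : ∀ c ⊆ K, IsChain (· ⊆ ·) c → c.Nonempty → ∃ ub ∈ K, ∀ z ∈ c, z ⊆ ub := by
    refine fun c hcK hc hne => ⟨⋃₀ c,
      ⟨isCons_sUnion_of_isChain hc hne fun z hz => (hcK hz).1, sUnion_subset fun z hz => ?_⟩,
      fun z hz => subset_sUnion_of_mem hz⟩
    exact (hcK hz).2.trans (PhiWithin_mono_right x (subset_sUnion_of_mem hz))
  obtain ⟨y, hxy, ⟨hy, hyx⟩, hmax⟩ :=
    zorn_subset_nonempty K hK x ⟨hx, subset_iUnion (phiWithin Δ x x) 0⟩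
  refine ⟨y, hy, (PhiT_subset hxy fun W a hW hWy ha => ?_).antisymm
    (hyx.trans (PhiWithin_subset_PhiT hΔ x hy))⟩
  have hy' : y ⊆ PhiWithin Δ x (insert a y) :=
    hyx.trans (PhiWithin_mono_right x (subset_insert a y))
  have hins : insert a y ∈ K := ⟨by rwa [insert_eq], insert_subset
    (mem_PhiWithin_of_mem_of_subset hW (hΔ _ hW) (hWy.trans hy') (mem_insert a y)) hy'⟩
  exact hmax hins (subset_insert a y) (mem_insert a y)

end Extensions

theorem skeptical_is_abstract_nms_general {α : Type*} (Con : Set α → Prop) (Δ : Set (Set α × α))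
    -- Con is a collection of finite subsets of A with ∅ ∈ Con, closed under
    -- subsets, containing every singleton
    (hCfin : ∀ X : Set α, Con X → X.Finite)
    (hCsub : ∀ X Y : Set α, X ⊆ Y → Con Y → Con X)
    (hCsing : ∀ a : α, Con {a})
    -- Δ is a set of normal default rules, each a pair (X, a) with X ∈ Con
    (hDelta : ∀ p ∈ Δ, Con p.1) :
    -- (1) X ⊆ Y and Y ∈ Con imply X ∈ Con
    (∀ X Y : Set α, X ⊆ Y → Con Y → Con X) ∧
    -- (2) {a} ∈ Con for every a ∈ A
    (∀ a : α, Con {a}) ∧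
    -- (3) X |~_A T implies X ∪ T ∈ Con
    (∀ X T : Set α, Con X → T.Finite → NmcS Con Δ X T → Con (X ∪ T)) ∧
    -- (4) Y ⊆ X and X ∈ Con imply X |~_A Y
    (∀ X Y : Set α, Y ⊆ X → Con X → NmcS Con Δ X Y) ∧
    -- (5) cautious cut
    (∀ X T Y : Set α, Con X → Con T → Con Y →
      NmcS Con Δ X T → NmcS Con Δ (X ∪ T) Y → NmcS Con Δ X Y) ∧
    -- (6) X |~_A Y and X |~_A Z imply X |~_A Y ∪ Z
    (∀ X Y Z : Set α, Con X → Con Y → Con Z →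
      NmcS Con Δ X Y → NmcS Con Δ X Z → NmcS Con Δ X (Y ∪ Z)) := by
  have hΔ : ∀ p ∈ Δ, p.1.Finite := fun p hp => hCfin p.1 (hDelta p hp)
  refine ⟨hCsub, hCsing, ?_, ?_, ?_, ?_⟩
  · intro X T hX hTfin hXT
    obtain ⟨y, hy⟩ := exists_extT hΔ fun W hW _ => hCsub W X hW hX
    exact hy.1 (X ∪ T) (union_subset hy.subset fun b hb => hXT b hb y hy)
      ((hCfin X hX).union hTfin)
  · exact fun X Y hYX _ b hb y hy => hy.subset (hYX hb)
  · exact fun X T Y _ _ _ hXT hXTY b hb y hy =>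
      hXTY b hb y (hy.union_of_subset hΔ fun t ht => hXT t ht y hy)
  · rintro X Y Z - - - hY hZ b (hb | hb)
    exacts [hY b hb, hZ b hb]

/-- (A, Con, |~_A) is an abstract nonmonotonic system. -/
theorem skeptical_is_abstract_nms {α : Type*} (Con : Set α → Prop) (Δ : Set (Set α × α))
    -- Con is a collection of finite subsets of A with ∅ ∈ Con, closed under
    -- subsets, containing every singleton
    (hCfin : ∀ X : Set α, Con X → X.Finite)
    (hCempty : Con ∅)
    (hCsub : ∀ X Y : Set α, X ⊆ Y → Con Y → Con X)
    (hCsing : ∀ a : α, Con {a})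
    -- Δ is a set of normal default rules, each a pair (X, a) with X ∈ Con
    (hDelta : ∀ p ∈ Δ, Con p.1) :
    -- (1) X ⊆ Y and Y ∈ Con imply X ∈ Con
    (∀ X Y : Set α, X ⊆ Y → Con Y → Con X) ∧
    -- (2) {a} ∈ Con for every a ∈ A
    (∀ a : α, Con {a}) ∧
    -- (3) X |~_A T implies X ∪ T ∈ Con
    (∀ X T : Set α, Con X → T.Finite → NmcS Con Δ X T → Con (X ∪ T)) ∧
    -- (4) Y ⊆ X and X ∈ Con imply X |~_A Y
    (∀ X Y : Set α, Y ⊆ X → Con X → NmcS Con Δ X Y) ∧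
    -- (5) cautious cut
    (∀ X T Y : Set α, Con X → Con T → Con Y →
      NmcS Con Δ X T → NmcS Con Δ (X ∪ T) Y → NmcS Con Δ X Y) ∧
    -- (6) X |~_A Y and X |~_A Z imply X |~_A Y ∪ Z
    (∀ X Y Z : Set α, Con X → Con Y → Con Z →
      NmcS Con Δ X Y → NmcS Con Δ X Z → NmcS Con Δ X (Y ∪ Z)) :=
  skeptical_is_abstract_nms_general Con Δ hCfin hCsub hCsing hDelta
end

section
/- Let (A, Con, |~) be an abstract nonmonotonic system and B = (B, Con*, Δ) the canonical default structure constructed from it. Then every extension in B of a finite consistent set P ∈ Con is of the form Q̃ ∪ {[Q]} for some Q ∈ Con with Q ⊆ P ⊆ Q̃. -/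
/-- X̃ := {t ∈ A | X |~ {t}}. -/
def Tilde {α : Type*} (snake : Set α → Set α → Prop) (X : Set α) : Set α :=
  {t | snake X {t}}

/-- The token set of the canonical default structure: tokens of A (`Sum.inl a`) together
with a fresh token [X] (`Sum.inr X`) for each X ∈ Con. -/
abbrev Tok (α : Type*) := α ⊕ Set α

/-- Δ := {(X, [X]) | X ∈ Con} ∪ {({[X]}, a) | X ∈ Con, X |~ {a}, a ∉ X}. -/
def DeltaCan {α : Type*} (Con : Set α → Prop) (snake : Set α → Set α → Prop) :
    Set (Set (Tok α) × Tok α) :=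
  {p | ∃ X : Set α, Con X ∧ p = (Sum.inl '' X, Sum.inr X)} ∪
  {p | ∃ (X : Set α) (a : α), Con X ∧ snake X {a} ∧ a ∉ X ∧
        p = ({Sum.inr X}, Sum.inl a)}

/-- A finite W ⊆ B lies in Con* iff (1) W ∩ A ∈ Con, (2) W contains at most one token of
the form [X], and (3) if [X] ∈ W then W \ {[X]} ⊆ A and X |~ (W \ {[X]}). -/
def ConStar {α : Type*} (Con : Set α → Prop) (snake : Set α → Set α → Prop)
    (W : Set (Tok α)) : Prop :=
  W.Finite ∧
  Con (Sum.inl ⁻¹' W) ∧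
  (∀ X Y : Set α, Sum.inr X ∈ W → Sum.inr Y ∈ W → X = Y) ∧
  (∀ X : Set α, Sum.inr X ∈ W →
    (∀ t ∈ W, t ≠ Sum.inr X → ∃ a : α, t = Sum.inl a) ∧
    snake X (Sum.inl ⁻¹' W))

open Set

section DefaultStructure

variable {α : Type*} {Con : Set α → Prop} {Δ : Set (Set α × α)} {x y : Set α}

lemma IsCons.mono {S T : Set α} (hS : IsCons Con S) (hTS : T ⊆ S) : IsCons Con T :=
  fun X hX hfin => hS X (hX.trans hTS) hfin

lemma phiT_subset_of_PhiT_eq (hy : PhiT Con Δ x y = y) (i : ℕ) : phiT Con Δ x y i ⊆ y :=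
  (subset_iUnion (phiT Con Δ x y) i).trans hy.le

lemma subset_of_PhiT_eq (hy : PhiT Con Δ x y = y) : x ⊆ y :=
  phiT_subset_of_PhiT_eq hy 0

lemma mem_of_PhiT_eq_of_rule (hy : PhiT Con Δ x y = y) {X : Set α} {a : α} (hXa : (X, a) ∈ Δ)
    {i : ℕ} (hXi : X ⊆ phiT Con Δ x y i) (ha : IsCons Con ({a} ∪ y)) : a ∈ y :=
  phiT_subset_of_PhiT_eq hy (i + 1) (Or.inr ⟨X, hXa, hXi, ha⟩)

lemma exists_rule_of_PhiT_eq (hy : PhiT Con Δ x y = y) {t : α} (ht : t ∈ y) :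
    t ∈ x ∨ ∃ X, (X, t) ∈ Δ ∧ X ⊆ y := by
  suffices h : ∀ i, ∀ t ∈ phiT Con Δ x y i, t ∈ x ∨ ∃ X, (X, t) ∈ Δ ∧ X ⊆ y by
    obtain ⟨i, hi⟩ := mem_iUnion.1 (hy.symm ▸ ht : t ∈ PhiT Con Δ x y)
    exact h i t hi
  intro i
  induction i with
  | zero => exact fun t ht => Or.inl ht
  | succ i ih =>
    rintro t (ht | ⟨X, hX, hXi, -⟩)
    · exact ih t ht
    · exact Or.inr ⟨X, hX, hXi.trans (phiT_subset_of_PhiT_eq hy i)⟩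

end DefaultStructure

section Canonical

variable {α : Type*} {Con : Set α → Prop} {snake : Set α → Set α → Prop}

lemma premise_eq_of_mem_deltaCan_inr {X : Set (Tok α)} {Y : Set α}
    (h : (X, Sum.inr Y) ∈ DeltaCan Con snake) : Con Y ∧ X = Sum.inl '' Y := by
  rcases h with ⟨Z, hZ, hp⟩ | ⟨Z, a, -, -, -, hp⟩
  · simp only [Prod.mk.injEq, Sum.inr.injEq] at hp
    obtain ⟨rfl, rfl⟩ := hp
    exact ⟨hZ, rfl⟩
  · simp at hp

lemma premise_eq_of_mem_deltaCan_inl {X : Set (Tok α)} {a : α}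
    (h : (X, Sum.inl a) ∈ DeltaCan Con snake) :
    ∃ Y, snake Y {a} ∧ a ∉ Y ∧ X = {Sum.inr Y} := by
  rcases h with ⟨Z, -, hp⟩ | ⟨Z, b, -, hZb, hbZ, hp⟩
  · simp at hp
  · simp only [Prod.mk.injEq, Sum.inl.injEq] at hp
    obtain ⟨rfl, rfl⟩ := hp
    exact ⟨Z, hZb, hbZ, rfl⟩

lemma IsCons.inr_eq {W : Set (Tok α)} (hW : IsCons (ConStar Con snake) W) {X Y : Set α}
    (hX : Sum.inr X ∈ W) (hY : Sum.inr Y ∈ W) : X = Y :=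
  (hW _ (insert_subset hX (singleton_subset_iff.2 hY)) (toFinite _)).2.2.1 X Y
    (mem_insert _ _) (mem_insert_of_mem _ rfl)

lemma IsCons.mem_tilde {W : Set (Tok α)} (hW : IsCons (ConStar Con snake) W) {Q : Set α}
    {a : α} (hQ : Sum.inr Q ∈ W) (ha : Sum.inl a ∈ W) : a ∈ Tilde snake Q := by
  have h := (hW _ (insert_subset hQ (singleton_subset_iff.2 ha)) (toFinite _)).2.2.2 Q
    (mem_insert _ _)
  have hpre : Sum.inl ⁻¹' ({Sum.inr Q, Sum.inl a} : Set (Tok α)) = {a} := by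
    ext b
    simp
  rw [hpre] at h
  exact h.2

lemma snake_of_subset_tilde (h4 : ∀ X Y : Set α, Y ⊆ X → Con X → snake X Y)
    (h6 : ∀ X Y Z : Set α, snake X Y → snake X Z → snake X (Y ∪ Z))
    {Q F : Set α} (hQ : Con Q) (hF : F.Finite) (hFQ : F ⊆ Tilde snake Q) : snake Q F := by
  induction F, hF using Set.Finite.induction_on with
  | empty => exact h4 Q ∅ (empty_subset _) hQ
  | insert _ _ ih =>
    rw [insert_eq]
    exact h6 _ _ _ (hFQ (mem_insert _ _)) (ih ((subset_insert _ _).trans hFQ))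

lemma isCons_tilde_union_inr (h1 : ∀ X Y : Set α, X ⊆ Y → Con Y → Con X)
    (h3 : ∀ X T : Set α, snake X T → Con (X ∪ T))
    (h4 : ∀ X Y : Set α, Y ⊆ X → Con X → snake X Y)
    (h6 : ∀ X Y Z : Set α, snake X Y → snake X Z → snake X (Y ∪ Z))
    {Q : Set α} (hQ : Con Q) :
    IsCons (ConStar Con snake) (Sum.inl '' Tilde snake Q ∪ {Sum.inr Q}) := by
  intro V hV hfin
  have hpre : Sum.inl ⁻¹' V ⊆ Tilde snake Q := fun a ha => by simpa using hV ha
  have hsnake : snake Q (Sum.inl ⁻¹' V) :=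
    snake_of_subset_tilde h4 h6 hQ (hfin.preimage Sum.inl_injective.injOn) hpre
  have hinr : ∀ X, Sum.inr X ∈ V → X = Q := fun X hX => by simpa using hV hX
  refine ⟨hfin, h1 _ _ subset_union_right (h3 _ _ hsnake),
    fun X Y hX hY => (hinr X hX).trans (hinr Y hY).symm, fun X hX => ?_⟩
  obtain rfl := hinr X hX
  refine ⟨fun t ht hne => ?_, hsnake⟩
  rcases t with a | Y
  · exact ⟨a, rfl⟩
  · exact absurd (congrArg Sum.inr (hinr Y ht)) hne

variable {P : Set α} {W : Set (Tok α)}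

lemma con_and_image_subset_of_inr_mem
    (hW : ExtT (ConStar Con snake) (DeltaCan Con snake) (Sum.inl '' P) W) {Q : Set α}
    (hQ : Sum.inr Q ∈ W) : Con Q ∧ Sum.inl '' Q ⊆ W := by
  rcases exists_rule_of_PhiT_eq hW.2 hQ with ⟨a, -, ha⟩ | ⟨X, hX, hXW⟩
  · exact absurd ha Sum.inl_ne_inr
  · obtain ⟨hQ', rfl⟩ := premise_eq_of_mem_deltaCan_inr hX
    exact ⟨hQ', hXW⟩

lemma subset_of_inr_mem_extT
    (hW : ExtT (ConStar Con snake) (DeltaCan Con snake) (Sum.inl '' P) W) {Q : Set α}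
    (hQ : Sum.inr Q ∈ W) : Q ⊆ P := by
  intro a ha
  have haW := (con_and_image_subset_of_inr_mem hW hQ).2 (mem_image_of_mem _ ha)
  rcases exists_rule_of_PhiT_eq hW.2 haW with ⟨b, hb, hba⟩ | ⟨X, hX, hXW⟩
  · exact Sum.inl_injective hba ▸ hb
  · obtain ⟨Y, -, haY, rfl⟩ := premise_eq_of_mem_deltaCan_inl hX
    obtain rfl := hW.1.inr_eq (hXW rfl) hQ
    exact absurd ha haY

lemma exists_inr_mem_of_extT (hP : Con P) (hPP : P ⊆ Tilde snake P)
    (hcanP : IsCons (ConStar Con snake) (Sum.inl '' Tilde snake P ∪ {Sum.inr P}))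
    (hW : ExtT (ConStar Con snake) (DeltaCan Con snake) (Sum.inl '' P) W) :
    ∃ Q, Sum.inr Q ∈ W := by
  by_contra! hno
  have hWP : W ⊆ Sum.inl '' P := by
    intro t ht
    rcases exists_rule_of_PhiT_eq hW.2 ht with htP | ⟨X, hX, hXW⟩
    · exact htP
    · rcases t with a | Y
      · obtain ⟨Y, -, -, rfl⟩ := premise_eq_of_mem_deltaCan_inl hX
        exact absurd (hXW rfl) (hno Y)
      · exact absurd ht (hno Y)
  refine hno P (mem_of_PhiT_eq_of_rule hW.2 (i := 0) (Or.inl ⟨P, hP, rfl⟩) subset_rfl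
    (hcanP.mono ?_))
  exact union_subset (by simp) (hWP.trans ((image_mono hPP).trans subset_union_left))

lemma extT_eq_of_inr_mem
    (hcan : ∀ Q, Con Q → IsCons (ConStar Con snake) (Sum.inl '' Tilde snake Q ∪ {Sum.inr Q}))
    (hW : ExtT (ConStar Con snake) (DeltaCan Con snake) (Sum.inl '' P) W) {Q : Set α}
    (hQ : Sum.inr Q ∈ W) : W = Sum.inl '' Tilde snake Q ∪ {Sum.inr Q} := by
  obtain ⟨hQcon, hQW⟩ := con_and_image_subset_of_inr_mem hW hQ
  have hWsub : W ⊆ Sum.inl '' Tilde snake Q ∪ {Sum.inr Q} := by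
    rintro (a | Y) ht
    · exact Or.inl ⟨a, hW.1.mem_tilde hQ ht, rfl⟩
    · exact Or.inr (congrArg Sum.inr (hW.1.inr_eq ht hQ))
  refine hWsub.antisymm (union_subset ?_ (singleton_subset_iff.2 hQ))
  rintro _ ⟨a, ha, rfl⟩
  by_cases haQ : a ∈ Q
  · exact hQW (mem_image_of_mem _ haQ)
  · obtain ⟨i, hi⟩ := mem_iUnion.1 (hW.2.symm ▸ hQ : Sum.inr Q ∈ PhiT _ _ _ W)
    exact mem_of_PhiT_eq_of_rule hW.2 (Or.inr ⟨Q, a, hQcon, ha, haQ, rfl⟩)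
      (singleton_subset_iff.2 hi)
      ((hcan Q hQcon).mono (union_subset (singleton_subset_iff.2 (Or.inl ⟨a, ha, rfl⟩)) hWsub))

end Canonical

theorem canonical_extension_form_general {α : Type*} (Con : Set α → Prop)
    (snake : Set α → Set α → Prop)
    (h1 : ∀ X Y : Set α, X ⊆ Y → Con Y → Con X)
    (h3 : ∀ X T : Set α, snake X T → Con (X ∪ T))
    (h4 : ∀ X Y : Set α, Y ⊆ X → Con X → snake X Y)
    (h6 : ∀ X Y Z : Set α, snake X Y → snake X Z → snake X (Y ∪ Z)) :
    ∀ P : Set α, Con P →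
      ∀ W : Set (Tok α),
        ExtT (ConStar Con snake) (DeltaCan Con snake) (Sum.inl '' P) W →
        ∃ Q : Set α, Con Q ∧ Q ⊆ P ∧ P ⊆ Tilde snake Q ∧
          W = Sum.inl '' Tilde snake Q ∪ {Sum.inr Q} := by
  intro P hP W hW
  have hcan := fun Q (hQ : Con Q) => isCons_tilde_union_inr h1 h3 h4 h6 hQ
  have hPP : P ⊆ Tilde snake P := fun a ha => h4 P {a} (singleton_subset_iff.2 ha) hP
  obtain ⟨Q, hQ⟩ := exists_inr_mem_of_extT hP hPP (hcan P hP) hW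
  exact ⟨Q, (con_and_image_subset_of_inr_mem hW hQ).1, subset_of_inr_mem_extT hW hQ,
    fun a ha => hW.1.mem_tilde hQ (subset_of_PhiT_eq hW.2 (mem_image_of_mem _ ha)),
    extT_eq_of_inr_mem hcan hW hQ⟩

/-- every extension in B of a finite consistent set P ∈ Con has the form
Q̃ ∪ {[Q]} for some Q ∈ Con with Q ⊆ P ⊆ Q̃. -/
theorem canonical_extension_form {α : Type*} (Con : Set α → Prop)
    (snake : Set α → Set α → Prop)
    -- Con is a collection of finite subsets of A
    (hCfin : ∀ X : Set α, Con X → X.Finite)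
    -- |~ is a relation between members of Con
    (hSnakeCon : ∀ X Y : Set α, snake X Y → Con X ∧ Con Y)
    (h1 : ∀ X Y : Set α, X ⊆ Y → Con Y → Con X)
    (h2 : ∀ a : α, Con {a})
    (h3 : ∀ X T : Set α, snake X T → Con (X ∪ T))
    (h4 : ∀ X Y : Set α, Y ⊆ X → Con X → snake X Y)
    (h5 : ∀ X T Y : Set α, snake X T → snake (X ∪ T) Y → snake X Y)
    (h6 : ∀ X Y Z : Set α, snake X Y → snake X Z → snake X (Y ∪ Z)) :
    ∀ P : Set α, Con P →
      ∀ W : Set (Tok α),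
        ExtT (ConStar Con snake) (DeltaCan Con snake) (Sum.inl '' P) W →
        ∃ Q : Set α, Con Q ∧ Q ⊆ P ∧ P ⊆ Tilde snake Q ∧
          W = Sum.inl '' Tilde snake Q ∪ {Sum.inr Q} :=
  canonical_extension_form_general Con snake h1 h3 h4 h6
end
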